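/- Let α ≥ 0 be a real number. If the function Ω(x)^α is TN (i.e., the Toeplitz kernel (x,y) ↦ Ω(x−y)^α on ℝ × ℝ is totally non-negative), then α is a non-negative integer. -/

import Mathlib

open Matrix Set Filter

/-- Real power with the convention `0 ^ α := 0` (including `0 ^ 0 := 0`). -/
noncomputable def pow0 (x α : ℝ) : ℝ := if x = 0 then 0 else x ^ α

/-- A kernel `K` is totally non-negative (of all orders) on `X × Y`. -/
def TNKer (X Y : Set ℝ) (K : ℝ → ℝ → ℝ) : Prop :=
  ∀ r : ℕ, 1 ≤ r → ∀ x y : Fin r → ℝ,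
    StrictMono x → StrictMono y → (∀ j, x j ∈ X) → (∀ j, y j ∈ Y) →
      0 ≤ (Matrix.of fun j k => K (x j) (y k)).det

/-- Karlin's kernel `Ω(x) = x e^{-x}` for `x > 0`, else `0`. -/
noncomputable def Omega (x : ℝ) : ℝ := if 0 < x then x * Real.exp (-x) else 0

/-!
For `v > 0` we have `Ω(v)^α = v^α e^{-αv}`, and the exponential splits into positive row and
column scalings, so total non-negativity of `Ω^α` makes `(x, y) ↦ (x - y)^α` totally
non-negative on `[1, ∞) × (-∞, 0]`. Sample it at `x_j = 1 + j h`, `y_k = -(r - 1 - k) h`: the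
entries are `(1 + (j + r - 1 - k) h)^α`. Forward differences in `j` and in `r - 1 - k` are
unimodular row and column operations; by the mean value theorem they turn the entries into
`h^(j + r - 1 - k)` times derivatives of `t ↦ t^α`, and letting `h → 0` gives
`det (D^(j + r - 1 - k) t^α |_{t = 1}) ≥ 0`. These derivatives are falling factorials of `α`;
pulling the factor `α (α - 1) ⋯ (α - (r - 1 - k) + 1)` out of column `k` leaves a matrix of monic
polynomials of degree `j` evaluated at `k`, i.e. a Vandermonde determinant. Hence the determinant
is a positive multiple of `∏_{k < r} α (α - 1) ⋯ (α - k + 1)`, which for non-integral `α` and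
`r = ⌊α⌋ + 3` has exactly one negative factor.
-/

open Finset Topology Polynomial

namespace TNKer

variable {X Y : Set ℝ} {K : ℝ → ℝ → ℝ}

theorem mono {X' Y' : Set ℝ} (hK : TNKer X Y K) (hX : X' ⊆ X) (hY : Y' ⊆ Y) :
    TNKer X' Y' K :=
  fun r hr x y hx hy hxX hyY => hK r hr x y hx hy (fun j => hX (hxX j)) (fun k => hY (hyY k))

theorem congr {L : ℝ → ℝ → ℝ} (hK : TNKer X Y K) (hKL : ∀ x ∈ X, ∀ y ∈ Y, K x y = L x y) :
    TNKer X Y L := by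
  intro r hr x y hx hy hxX hyY
  convert hK r hr x y hx hy hxX hyY using 2
  ext j k
  exact (hKL _ (hxX j) _ (hyY k)).symm

theorem mul_left_mul_right {a b : ℝ → ℝ} (hK : TNKer X Y K) (ha : ∀ x ∈ X, 0 < a x)
    (hb : ∀ y ∈ Y, 0 < b y) : TNKer X Y fun x y => a x * K x y * b y := by
  intro r hr x y hx hy hxX hyY
  have hdet : (of fun j k => a (x j) * K (x j) (y k) * b (y k)).det =
      (∏ j, a (x j)) * ((∏ k, b (y k)) * (of fun j k => K (x j) (y k)).det) := by
    rw [← det_mul_row, ← det_mul_column]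
    congr 1
    ext j k
    simp only [of_apply]
    ring
  rw [hdet]
  exact mul_nonneg (prod_pos fun j _ => ha _ (hxX j)).le
    (mul_nonneg (prod_pos fun k _ => hb _ (hyY k)).le (hK r hr x y hx hy hxX hyY))

end TNKer

theorem exists_fwdDiff_iter_eq_pow_mul {F : ℕ → ℝ → ℝ} {a h : ℝ} (hh : 0 < h) (n : ℕ)
    (hF : ∀ m, ∀ x ∈ Icc a (a + n * h), HasDerivAt (F m) (F (m + 1) x) x) :
    ∃ ξ ∈ Icc a (a + n * h), (fwdDiff h)^[n] (F 0) a = h ^ n * F n ξ := by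
  induction n generalizing F with
  | zero => exact ⟨a, by simp, by simp⟩
  | succ n ih =>
    have hsub : Icc a (a + n * h) ⊆ Icc a (a + (n + 1 : ℕ) * h) :=
      Icc_subset_Icc_right (by push_cast; linarith)
    obtain ⟨ξ, hξ, hΔ⟩ := ih (F := fun m => fwdDiff h (F m)) fun m x hx => by
      have hxh : x + h ∈ Icc a (a + (n + 1 : ℕ) * h) :=
        ⟨by linarith [hx.1], by push_cast; linarith [hx.2]⟩
      exact ((hF m (x + h) hxh).comp_add_const x h).sub (hF m x (hsub hx))
    have hξh : Icc ξ (ξ + h) ⊆ Icc a (a + (n + 1 : ℕ) * h) :=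
      Icc_subset_Icc hξ.1 (by push_cast; linarith [hξ.2])
    obtain ⟨c, hc, hslope⟩ := exists_hasDerivAt_eq_slope (F n) (F (n + 1))
      (lt_add_of_pos_right ξ hh)
      (fun x hx => (hF n x (hξh hx)).continuousAt.continuousWithinAt)
      (fun x hx => hF n x (hξh (Ioo_subset_Icc_self hx)))
    refine ⟨c, hξh (Ioo_subset_Icc_self hc), ?_⟩
    rw [Function.iterate_succ_apply, hΔ, fwdDiff, hslope, add_sub_cancel_left]
    field_simp
    ring

section SignedPascal

variable {r : ℕ}

def signedPascal (r : ℕ) : Matrix (Fin r) (Fin r) ℝ :=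
  of fun j i => (-1) ^ ((j : ℕ) - i) * ((j : ℕ).choose i)

theorem det_signedPascal (r : ℕ) : (signedPascal r).det = 1 := by
  rw [det_of_isLowerTriangular _ fun i j hij => ?_]
  · simp [signedPascal]
  · simp [signedPascal, Nat.choose_eq_zero_of_lt (show (i : ℕ) < j from hij)]

theorem fwdDiff_iter_eq_sum_signedPascal (f : ℝ → ℝ) (h y : ℝ) (j : Fin r) :
    (fwdDiff h)^[j] f y = ∑ i, signedPascal r j i * f (y + i * h) := by
  simp only [signedPascal, of_apply]
  rw [fwdDiff_iter_eq_sum_shift, Fin.sum_univ_eq_sum_range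
    (fun i => (-1 : ℝ) ^ ((j : ℕ) - i) * ((j : ℕ).choose i) * f (y + i * h))]
  refine Eq.trans ?_ (sum_subset (range_subset_range.2 j.2) fun i _ hi => ?_)
  · refine sum_congr rfl fun i _ => ?_
    simp [zsmul_eq_mul, nsmul_eq_mul]
  · simp [Nat.choose_eq_zero_of_lt (not_le.1 (mt Nat.lt_succ_of_le (mt mem_range.2 hi)))]

theorem signedPascal_mul_mul_transpose (f : ℝ → ℝ) (h y : ℝ) :
    signedPascal r * of (fun i l : Fin r => f (y + (i + l) * h)) * (signedPascal r)ᵀ =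
      of fun j k : Fin r => (fwdDiff h)^[(j : ℕ) + k] f y := by
  ext j k
  rw [of_apply, Function.iterate_add_apply, fwdDiff_iter_eq_sum_signedPascal, Matrix.mul_assoc,
    mul_apply]
  refine sum_congr rfl fun i _ => ?_
  simp only [fwdDiff_iter_eq_sum_signedPascal f h _ k, mul_apply, mul_sum]
  refine sum_congr rfl fun l _ => ?_
  rw [of_apply, transpose_apply, add_mul, add_assoc]
  ring

theorem det_fwdDiff_iter_add_perm (f : ℝ → ℝ) (h y : ℝ) (σ : Equiv.Perm (Fin r)) :
    (of fun j k : Fin r => (fwdDiff h)^[(j : ℕ) + σ k] f y).det =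
      (of fun j k : Fin r => f (y + (j + σ k) * h)).det := by
  have hdet : (of fun j k : Fin r => (fwdDiff h)^[(j : ℕ) + k] f y).det =
      (of fun i l : Fin r => f (y + (i + l) * h)).det := by
    rw [← signedPascal_mul_mul_transpose, det_mul, det_mul, det_transpose, det_signedPascal,
      one_mul, mul_one]
  calc _ = Equiv.Perm.sign σ * (of fun j k : Fin r => (fwdDiff h)^[(j : ℕ) + k] f y).det :=
        det_permute' σ _
    _ = _ := by rw [hdet]; exact (det_permute' σ _).symm

end SignedPascal

theorem exists_det_iterate_deriv_nonneg {f : ℝ → ℝ} {a h : ℝ} {r : ℕ}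
    (σ : Equiv.Perm (Fin r)) (hh : 0 < h)
    (hf : ∀ m, ∀ x ∈ Ici a, DifferentiableAt ℝ (deriv^[m] f) x)
    (hdet : 0 ≤ (of fun j k : Fin r => f (a + (j + σ k) * h)).det) :
    ∃ ξ : Fin r → Fin r → ℝ, (∀ j k : Fin r, ξ j k ∈ Icc a (a + (j + σ k : ℕ) * h)) ∧
      0 ≤ (of fun j k : Fin r => deriv^[(j : ℕ) + σ k] f (ξ j k)).det := by
  have hmvt (j k : Fin r) : ∃ ξ ∈ Icc a (a + (j + σ k : ℕ) * h),
      (fwdDiff h)^[(j : ℕ) + σ k] f a = h ^ (j + σ k : ℕ) * deriv^[(j : ℕ) + σ k] f ξ :=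
    exists_fwdDiff_iter_eq_pow_mul (F := fun m => deriv^[m] f) hh _ fun m x hx => by
      rw [Function.iterate_succ_apply']
      exact (hf m x hx.1).hasDerivAt
  choose ξ hξ hΔ using hmvt
  refine ⟨ξ, hξ, ?_⟩
  have hscale : (of fun j k : Fin r => (fwdDiff h)^[(j : ℕ) + σ k] f a).det =
      (∏ j : Fin r, h ^ (j : ℕ)) * ((∏ k : Fin r, h ^ (σ k : ℕ)) *
        (of fun j k : Fin r => deriv^[(j : ℕ) + σ k] f (ξ j k)).det) := by
    rw [← det_mul_row, ← det_mul_column]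
    congr 1
    ext j k
    simp only [of_apply, hΔ, pow_add]
    ring
  rw [← det_fwdDiff_iter_add_perm, hscale] at hdet
  exact nonneg_of_mul_nonneg_right (nonneg_of_mul_nonneg_right hdet (by positivity))
    (by positivity)

theorem det_iterate_deriv_nonneg {f : ℝ → ℝ} {a : ℝ} {r : ℕ} (σ : Equiv.Perm (Fin r))
    (hf : ∀ m, ∀ x ∈ Ici a, DifferentiableAt ℝ (deriv^[m] f) x)
    (hdet : ∀ h > 0, 0 ≤ (of fun j k : Fin r => f (a + (j + σ k) * h)).det) :
    0 ≤ (of fun j k : Fin r => deriv^[(j : ℕ) + σ k] f a).det := by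
  choose ξ hξ hξdet using fun n : ℕ =>
    exists_det_iterate_deriv_nonneg σ Nat.one_div_pos_of_nat hf (hdet _ Nat.one_div_pos_of_nat)
  have hξlim (j k : Fin r) : Tendsto (fun n => ξ n j k) atTop (𝓝 a) := by
    have hup : Tendsto (fun n : ℕ => a + (j + σ k : ℕ) * (1 / ((n : ℝ) + 1))) atTop (𝓝 a) := by
      simpa using tendsto_const_nhds.add
        (tendsto_one_div_add_atTop_nhds_zero_nat.const_mul ((j + σ k : ℕ) : ℝ))
    exact tendsto_of_tendsto_of_tendsto_of_le_of_le tendsto_const_nhds hup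
      (fun n => (hξ n j k).1) (fun n => (hξ n j k).2)
  have hlim : Tendsto (fun n => of fun j k : Fin r => deriv^[(j : ℕ) + σ k] f (ξ n j k)) atTop
      (𝓝 (of fun j k : Fin r => deriv^[(j : ℕ) + σ k] f a)) :=
    tendsto_pi_nhds.2 fun j => tendsto_pi_nhds.2 fun k =>
      (hf _ a self_mem_Ici).continuousAt.tendsto.comp (hξlim j k)
  exact ge_of_tendsto ((continuous_id.matrix_det.tendsto _).comp hlim)
    (Eventually.of_forall hξdet)

theorem TNKer.det_iterate_deriv_rev_nonneg {f : ℝ → ℝ} {a : ℝ}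
    (hK : TNKer (Ici a) (Iic 0) fun x y => f (x - y))
    (hf : ∀ m, ∀ x ∈ Ici a, DifferentiableAt ℝ (deriv^[m] f) x) (r : ℕ) :
    0 ≤ (of fun j k : Fin r => deriv^[(j : ℕ) + Fin.rev k] f a).det := by
  rcases Nat.eq_zero_or_pos r with rfl | hr
  · simp
  refine det_iterate_deriv_nonneg Fin.revPerm hf fun h hh => ?_
  have hx : StrictMono fun j : Fin r => a + j * h := fun i j hij => by
    have : (i : ℝ) < j := by exact_mod_cast hij
    simpa using mul_lt_mul_of_pos_right this hh
  have hy : StrictMono fun k : Fin r => -((Fin.rev k : ℕ) * h) := fun i j hij => by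
    have : ((Fin.rev j : ℕ) : ℝ) < Fin.rev i := by exact_mod_cast Fin.rev_lt_rev.2 hij
    simpa using mul_lt_mul_of_pos_right this hh
  convert hK r hr _ _ hx hy
    (fun j => by simp only [Set.mem_Ici, le_add_iff_nonneg_right]; positivity)
    (fun k => by simp only [Set.mem_Iic, neg_nonpos]; positivity) using 3
  ext j k
  simp only [Fin.revPerm_apply]
  ring_nf

theorem pow0_Omega_of_pos (α : ℝ) {v : ℝ} (hv : 0 < v) :
    pow0 (Omega v) α = v ^ α * Real.exp (-(α * v)) := by
  have hΩ : Omega v = v * Real.exp (-v) := if_pos hv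
  rw [pow0, if_neg (by rw [hΩ]; positivity), hΩ, Real.mul_rpow hv.le (Real.exp_pos _).le,
    ← Real.exp_mul]
  ring_nf

theorem TNKer.rpow_sub_of_pow0_Omega {α : ℝ}
    (h : TNKer univ univ fun x y => pow0 (Omega (x - y)) α) :
    TNKer (Ici 1) (Iic 0) fun x y => (x - y) ^ α := by
  refine ((h.mono (subset_univ (Ici 1)) (subset_univ (Iic 0))).mul_left_mul_right
    (a := fun x => Real.exp (α * x)) (b := fun y => Real.exp (-(α * y)))
    (fun _ _ => Real.exp_pos _) (fun _ _ => Real.exp_pos _)).congr fun x hx y hy => ?_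
  have hxy : 0 < x - y := by linarith [mem_Ici.1 hx, mem_Iic.1 hy]
  rw [pow0_Omega_of_pos α hxy]
  calc _ = (x - y) ^ α * Real.exp (α * x + -(α * (x - y)) + -(α * y)) := by
        rw [Real.exp_add, Real.exp_add]; ring
    _ = (x - y) ^ α := by ring_nf; rw [Real.exp_zero, mul_one]

theorem differentiableAt_iterate_deriv_rpow_const (α : ℝ) (m : ℕ) {x : ℝ} (hx : x ≠ 0) :
    DifferentiableAt ℝ (deriv^[m] fun x : ℝ => x ^ α) x := by
  rw [show (deriv^[m] fun x : ℝ => x ^ α) = _ from funext (Real.iter_deriv_rpow_const α · m)]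
  exact (Real.differentiableAt_rpow_const_of_ne _ hx).const_mul _

theorem det_vandermonde_pos {r : ℕ} {v : Fin r → ℝ} (hv : StrictMono v) :
    0 < (vandermonde v).det := by
  rw [det_vandermonde]
  exact prod_pos fun i _ => prod_pos fun j hj => sub_pos.2 (hv (mem_Ioi.1 hj))

theorem det_descPochhammer_eval_add_rev (α : ℝ) (r : ℕ) :
    (of fun j k : Fin r => (descPochhammer ℝ ((j : ℕ) + Fin.rev k)).eval α).det =
      (∏ k ∈ range r, (descPochhammer ℝ k).eval α) *
        (vandermonde fun k : Fin r => (k : ℝ)).det := by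
  set q : Fin r → ℝ[X] := fun j => (descPochhammer ℝ j).comp (X + C (α - (r - 1)))
  have hentry (j k : Fin r) : (descPochhammer ℝ ((j : ℕ) + Fin.rev k)).eval α =
      (descPochhammer ℝ (Fin.rev k)).eval α * (q j).eval (k : ℝ) := by
    simp only [add_comm (j : ℕ), ← descPochhammer_mul, eval_mul, eval_comp, q, eval_sub,
      eval_add, eval_X, eval_C, eval_natCast, Fin.val_rev]
    rw [Nat.cast_sub k.2]
    push_cast
    congr 2
    ring
  have hq : (vandermonde fun k : Fin r => (k : ℝ)).det =
      (of fun j k : Fin r => (q j).eval (k : ℝ)).det := by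
    rw [det_eval_matrixOfPolynomials_eq_det_vandermonde _ q
      (fun j => by rw [natDegree_comp, natDegree_X_add_C, descPochhammer_natDegree, mul_one])
      (fun j => (monic_descPochhammer ℝ j).comp_X_add_C _), ← det_transpose]
    rfl
  simp only [hentry]
  refine (det_mul_row _ (of fun j k : Fin r => (q j).eval (k : ℝ))).trans ?_
  rw [← Fin.prod_univ_eq_prod_range (fun k => (descPochhammer ℝ k).eval α), hq]
  congr 1
  exact Equiv.prod_comp Fin.revPerm fun k => (descPochhammer ℝ k).eval α

theorem prod_range_descPochhammer_eval_neg {α : ℝ} (hα : 0 ≤ α) (hαn : ∀ n : ℕ, α ≠ n) :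
    ∏ k ∈ range (⌊α⌋₊ + 3), (descPochhammer ℝ k).eval α < 0 := by
  have hfloor : (⌊α⌋₊ : ℝ) < α := (Nat.floor_le hα).lt_of_ne (hαn _).symm
  have hpos (k : ℕ) (hk : k ≤ ⌊α⌋₊ + 1) : 0 < (descPochhammer ℝ k).eval α := by
    refine descPochhammer_pos ?_
    have : (k : ℝ) ≤ ⌊α⌋₊ + 1 := by exact_mod_cast hk
    linarith
  rw [prod_range_succ, descPochhammer_succ_eval]
  refine mul_neg_of_pos_of_neg
    (prod_pos fun k hk => hpos k (Nat.lt_succ_iff.1 (mem_range.1 hk)))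
    (mul_neg_of_pos_of_neg (hpos _ le_rfl) ?_)
  have := Nat.lt_floor_add_one α
  push_cast
  linarith

theorem stmt4 (α : ℝ) (hα : 0 ≤ α)
    (h : TNKer Set.univ Set.univ (fun x y => pow0 (Omega (x - y)) α)) :
    ∃ n : ℕ, α = n := by
  by_contra! hαn
  have hdet := h.rpow_sub_of_pow0_Omega.det_iterate_deriv_rev_nonneg
    (fun m x hx => differentiableAt_iterate_deriv_rpow_const α m
      (by linarith [Set.mem_Ici.1 hx] : x ≠ 0)) (⌊α⌋₊ + 3)
  simp only [Real.iter_deriv_rpow_const, Real.one_rpow, mul_one] at hdet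
  rw [det_descPochhammer_eval_add_rev] at hdet
  have hV := det_vandermonde_pos (v := fun k : Fin (⌊α⌋₊ + 3) => (k : ℝ))
    (Nat.strictMono_cast.comp Fin.val_strictMono)
  exact hdet.not_gt (mul_neg_of_neg_of_pos (prod_range_descPochhammer_eval_neg hα hαn) hV)
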